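/- For q ≥ 1, the random-cluster measure φ_{G,q} satisfies the positive lattice condition: for all configurations σ, τ ∈ {0,1}^E, φ_{G,q}(σ) · φ_{G,q}(τ) ≤ φ_{G,q}(σ ∧ τ) · φ_{G,q}(σ ∨ τ), where (σ∧τ)_e = min(σ_e, τ_e) and (σ∨τ)_e = max(σ_e, τ_e). -/

import Mathlib

/-!
The random-cluster model on a finite graph `G = (V, E)`.
Edges are given by their endpoints `ends : E → V × V` (unordered).  With edge
parameters `p e ∈ (0,1)` and cluster parameter `q > 0`, the random-cluster
measure gives a configuration `ω : E → Bool` probability proportional to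
`q ^ k(ω) · ∏_{ω e = 1} p e · ∏_{ω e = 0} (1 - p e)`, where `k(ω)` is the
number of connected components of the spanning subgraph `(V, {e : ω e = 1})`.
-/

attribute [local instance] Classical.propDecidable

namespace RandomCluster

variable {V E : Type*}

/-- One step along an open edge (in either direction, since edges are undirected). -/
def Step (ends : E → V × V) (ω : E → Bool) (u v : V) : Prop :=
  ∃ e, ω e = true ∧ (ends e = (u, v) ∨ ends e = (v, u))

/-- `Reach ends ω u v` : there is an open path from `u` to `v` in configuration `ω`. -/
def Reach (ends : E → V × V) (ω : E → Bool) (u v : V) : Prop :=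
  Relation.ReflTransGen (Step ends ω) u v

/-- The number of connected components `k(ω)` of the spanning subgraph
`(V, {e : ω e = 1})`: the number of classes of the equivalence relation
generated by open adjacency. -/
noncomputable def numComp (ends : E → V × V) (ω : E → Bool) : ℕ :=
  Nat.card (Quot (Step ends ω))

/-- The open cluster `C_A(ω)` of a set of vertices `A`: the set of edges lying
on some open path starting at a vertex of `A`. -/
def ClusterOf (ends : E → V × V) (A : Set V) (ω : E → Bool) : Set E :=
  {e | ω e = true ∧ ∃ a ∈ A, (Reach ends ω a (ends e).1 ∨ Reach ends ω a (ends e).2)}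

/-- The event `{A ↛ B}` that no open path joins a vertex of `A` to a vertex of `B`. -/
def NoConn (ends : E → V × V) (A B : Set V) : Set (E → Bool) :=
  {ω | ∀ a ∈ A, ∀ b ∈ B, ¬ Reach ends ω a b}

/-- The (unnormalized) random-cluster weight of a configuration. -/
noncomputable def rcWeight [Fintype E] (ends : E → V × V) (p : E → ℝ) (q : ℝ)
    (ω : E → Bool) : ℝ :=
  q ^ numComp ends ω * ∏ e, if ω e then p e else 1 - p e

/-- The random-cluster probability of a single configuration:
`φ_{G,q}(ω) = rcWeight ω / Z`. -/
noncomputable def rcProb [Fintype E] [DecidableEq E] (ends : E → V × V)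
    (p : E → ℝ) (q : ℝ) (ω : E → Bool) : ℝ :=
  rcWeight ends p q ω / ∑ ω' : E → Bool, rcWeight ends p q ω'

/-- The random-cluster probability `φ_{G,q}(A)` of an event `A ⊆ {0,1}^E`. -/
noncomputable def rcPr [Fintype E] [DecidableEq E] (ends : E → V × V)
    (p : E → ℝ) (q : ℝ) (A : Set (E → Bool)) : ℝ :=
  (∑ ω : E → Bool, A.indicator (rcWeight ends p q) ω) /
    ∑ ω : E → Bool, rcWeight ends p q ω

/-- Conditional probability `φ_{G,q}(A | B)`. -/
noncomputable def rcCondPr [Fintype E] [DecidableEq E] (ends : E → V × V)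
    (p : E → ℝ) (q : ℝ) (A B : Set (E → Bool)) : ℝ :=
  rcPr ends p q (A ∩ B) / rcPr ends p q B

/-- Conditional expectation `E_{φ_{G,q}}[f | B]`. -/
noncomputable def rcCondExp [Fintype E] [DecidableEq E] (ends : E → V × V)
    (p : E → ℝ) (q : ℝ) (f : (E → Bool) → ℝ) (B : Set (E → Bool)) : ℝ :=
  (∑ ω : E → Bool, B.indicator (fun ω' => rcWeight ends p q ω' * f ω') ω) /
    ∑ ω : E → Bool, B.indicator (rcWeight ends p q) ω

/-!
The edge factors satisfy `w(σ_e) w(τ_e) = w(min) w(max)` edge by edge, so for `q ≥ 1` the lattice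
condition reduces to supermodularity of the number of clusters,
`k(σ) + k(τ) ≤ k(σ ∧ τ) + k(σ ∨ τ)`. Opening an edge lowers `k` by one exactly when its endpoints
are not yet connected, and opening more edges can only connect them; so this decrease is
antitone in the configuration, and supermodularity follows by opening the edges of `σ \ τ` one at
a time.
-/

section Relation

variable {α : Type*}

def pairRel (a b : α) (x y : α) : Prop :=
  (x = a ∧ y = b) ∨ (x = b ∧ y = a)

theorem card_quot_eq_card_quot_sup_pairRel_add [Finite α] (r : α → α → Prop) (a b : α) :
    Nat.card (Quot r) =
      Nat.card (Quot (r ⊔ pairRel a b)) + if Quot.mk r a = Quot.mk r b then 0 else 1 := by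
  set q : α → Quot r := Quot.mk r
  set π : Quot r → Quot (r ⊔ pairRel a b) :=
    Quot.lift (Quot.mk _) fun x y h => Quot.sound (Or.inl h)
  -- `collapse` merges the class of `b` into that of `a`; it descends to the coarser quotient,
  -- where it has the projection as a left inverse, so that quotient is counted by its range.
  set collapse : Quot r → Quot r := fun z => if z = q b then q a else z
  have hπ : ∀ z, π (collapse z) = π z := by
    intro z
    by_cases hz : z = q b
    · simp only [collapse, hz, if_true]
      exact Quot.sound (Or.inr (Or.inl ⟨rfl, rfl⟩))
    · simp only [collapse, hz, if_false]
  set G : Quot (r ⊔ pairRel a b) → Quot r :=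
    Quot.lift (collapse ∘ q) fun x y h => by
      rcases h with h | ⟨rfl, rfl⟩ | ⟨rfl, rfl⟩
      · exact congrArg collapse (Quot.sound h)
      · simp [collapse, q]
      · simp [collapse, q]
  have hG_inj : Function.Injective G := by
    refine Function.LeftInverse.injective (g := π) fun z => ?_
    induction z using Quot.ind with | _ x => exact hπ (q x)
  have hGπ : G ∘ π = collapse := funext fun z => by
    induction z using Quot.ind with | _ x => rfl
  have hπ_surj : Function.Surjective π := fun z => by
    induction z using Quot.ind with | _ x => exact ⟨q x, rfl⟩
  rw [← Nat.card_range_of_injective hG_inj, ← hπ_surj.range_comp, hGπ]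
  split_ifs with hab
  · have : collapse = id := funext fun z => by
      by_cases hz : z = q b <;> simp [collapse, hz, hab]
    rw [this, Set.range_id, Nat.card_univ, add_zero]
  · have : Set.range collapse = {q b}ᶜ := by
      refine Set.Subset.antisymm ?_ fun z hz => ⟨z, if_neg hz⟩
      rintro _ ⟨z, rfl⟩
      by_cases hz : z = q b
      · simpa [collapse, hz] using hab
      · simp [collapse, hz]
    rw [this, Nat.card_coe_set_eq, ← Set.ncard_singleton (q b), Set.ncard_compl_add_ncard]

end Relation

theorem add_le_inf_add_sup_of_update {ι : Type*} [Fintype ι] {f : (ι → Bool) → ℕ}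
    (hf : ∀ α β : ι → Bool, α ≤ β → ∀ i,
      f (Function.update α i true) + f β ≤ f α + f (Function.update β i true))
    (σ τ : ι → Bool) : f σ + f τ ≤ f (σ ⊓ τ) + f (σ ⊔ τ) := by
  suffices key : ∀ (D : Finset ι) (σ : ι → Bool), (∀ i, σ i = true → τ i = false → i ∈ D) →
      f σ + f τ ≤ f (σ ⊓ τ) + f (σ ⊔ τ) from key Finset.univ σ fun i _ _ => Finset.mem_univ i
  intro D
  induction D using Finset.induction_on with
  | empty =>
    intro σ hσ
    have hστ : σ ≤ τ := fun i => Bool.le_iff_imp.2 fun hi => by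
      simpa using mt (hσ i hi) (Finset.notMem_empty i)
    rw [inf_eq_left.2 hστ, sup_eq_right.2 hστ]
  | insert j D _ ih =>
    intro σ hσ
    by_cases hj : σ j = true ∧ τ j = false
    · set σ' := Function.update σ j false
      have h_ih := ih σ' fun i hi hτ => by
        by_cases hij : i = j
        · simp [σ', hij] at hi
        · simp only [σ', Function.update_of_ne hij] at hi
          exact (Finset.mem_insert.1 (hσ i hi hτ)).resolve_left hij
      have h_step := hf σ' (σ' ⊔ τ) le_sup_left j
      have h_open : Function.update σ' j true = σ := by simp [σ', ← hj.1]
      have h_inf : σ' ⊓ τ = σ ⊓ τ := funext fun i => by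
        by_cases hij : i = j
        · subst hij; simp [σ', hj.2]
        · simp [σ', Function.update_of_ne hij]
      have h_sup : Function.update (σ' ⊔ τ) j true = σ ⊔ τ := funext fun i => by
        by_cases hij : i = j
        · subst hij; simp [hj.1]
        · simp [σ', Function.update_of_ne hij]
      rw [h_open, h_sup] at h_step
      rw [h_inf] at h_ih
      omega
    · exact ih σ fun i hi hτ => (Finset.mem_insert.1 (hσ i hi hτ)).resolve_left
        (by rintro rfl; exact hj ⟨hi, hτ⟩)

theorem map_min_mul_map_max {α M : Type*} [LinearOrder α] [CommMonoid M] (g : α → M) (a b : α) :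
    g (min a b) * g (max a b) = g a * g b := by
  rcases le_total a b with h | h
  · rw [min_eq_left h, max_eq_right h]
  · rw [min_eq_right h, max_eq_left h, mul_comm]

section Graph

variable (ends : E → V × V)

instance (ω : E → Bool) : Std.Symm (Step ends ω) where
  symm _ _ := fun ⟨e, he, h⟩ => ⟨e, he, h.symm⟩

theorem mk_eq_mk_iff_reach {ω : E → Bool} {u v : V} :
    Quot.mk (Step ends ω) u = Quot.mk (Step ends ω) v ↔ Reach ends ω u v := by
  rw [Quot.eq, Relation.EqvGen.eqvGen_eq_reflTransGen]
  rfl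

theorem reach_mono {ω ω' : E → Bool} (h : ω ≤ ω') {u v : V} (huv : Reach ends ω u v) :
    Reach ends ω' u v :=
  Relation.ReflTransGen.mono
    (fun _ _ ⟨e, he, hends⟩ => ⟨e, Bool.le_iff_imp.1 (h e) he, hends⟩) _ _ huv

theorem step_update_true (ω : E → Bool) (e : E) :
    Step ends (Function.update ω e true) = Step ends ω ⊔ pairRel (ends e).1 (ends e).2 := by
  ext u v
  simp only [Step, pairRel, Pi.sup_apply, sup_Prop_eq, Function.update_apply]
  constructor
  · rintro ⟨f, hf, hends⟩
    split_ifs at hf with hfe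
    · subst hfe
      right
      rcases hends with h | h <;> simp [h]
    · exact Or.inl ⟨f, hf, hends⟩
  · rintro (⟨f, hf, hends⟩ | ⟨rfl, rfl⟩ | ⟨rfl, rfl⟩)
    · exact ⟨f, by split_ifs <;> simp [hf], hends⟩
    · exact ⟨e, by simp, Or.inl rfl⟩
    · exact ⟨e, by simp, Or.inr rfl⟩

theorem numComp_eq_numComp_update_add [Finite V] (ω : E → Bool) (e : E) :
    numComp ends ω = numComp ends (Function.update ω e true) +
      if Reach ends ω (ends e).1 (ends e).2 then 0 else 1 := by
  rw [numComp, numComp, step_update_true, card_quot_eq_card_quot_sup_pairRel_add,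
    mk_eq_mk_iff_reach]

theorem numComp_update_add_le [Finite V] {α β : E → Bool} (h : α ≤ β) (e : E) :
    numComp ends (Function.update α e true) + numComp ends β ≤
      numComp ends α + numComp ends (Function.update β e true) := by
  rw [numComp_eq_numComp_update_add ends α e, numComp_eq_numComp_update_add ends β e]
  have := reach_mono ends h (u := (ends e).1) (v := (ends e).2)
  split_ifs <;> grind

theorem numComp_add_le_inf_add_sup [Finite V] [Fintype E] (σ τ : E → Bool) :
    numComp ends σ + numComp ends τ ≤ numComp ends (σ ⊓ τ) + numComp ends (σ ⊔ τ) :=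
  add_le_inf_add_sup_of_update (fun _ _ h e => numComp_update_add_le ends h e) σ τ

end Graph

theorem rcWeight_mul_le_inf_mul_sup [Finite V] [Fintype E] (ends : E → V × V) {p : E → ℝ}
    (hp : ∀ e, 0 ≤ p e ∧ p e ≤ 1) {q : ℝ} (hq : 1 ≤ q) (σ τ : E → Bool) :
    rcWeight ends p q σ * rcWeight ends p q τ ≤
      rcWeight ends p q (σ ⊓ τ) * rcWeight ends p q (σ ⊔ τ) := by
  set P : (E → Bool) → ℝ := fun ω => ∏ e, if ω e then p e else 1 - p e
  have hP : P σ * P τ = P (σ ⊓ τ) * P (σ ⊔ τ) := by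
    simp only [P, ← Finset.prod_mul_distrib]
    exact Finset.prod_congr rfl fun e _ =>
      (map_min_mul_map_max (fun b : Bool => if b then p e else 1 - p e) (σ e) (τ e)).symm
  have hP_nonneg : ∀ ω, 0 ≤ P ω := fun ω => Finset.prod_nonneg fun e _ => by
    split_ifs <;> linarith [hp e]
  have hk := pow_le_pow_right₀ hq (numComp_add_le_inf_add_sup ends σ τ)
  calc rcWeight ends p q σ * rcWeight ends p q τ
      = q ^ (numComp ends σ + numComp ends τ) * (P σ * P τ) := by
        simp only [rcWeight, P, pow_add]; ring
    _ ≤ q ^ (numComp ends (σ ⊓ τ) + numComp ends (σ ⊔ τ)) * (P σ * P τ) :=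
        mul_le_mul_of_nonneg_right hk (mul_nonneg (hP_nonneg σ) (hP_nonneg τ))
    _ = rcWeight ends p q (σ ⊓ τ) * rcWeight ends p q (σ ⊔ τ) := by
        simp only [rcWeight, hP, pow_add]; ring

/-- Lemma 2.2. For `q ≥ 1` the random-cluster measure
satisfies the positive lattice (FKG lattice) condition:
`φ(σ) · φ(τ) ≤ φ(σ ∧ τ) · φ(σ ∨ τ)`, where `(σ∧τ)_e = min(σ_e, τ_e)` and
`(σ∨τ)_e = max(σ_e, τ_e)`. -/
theorem stmt9 [Fintype V] [Fintype E] [DecidableEq E]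
    (ends : E → V × V) (p : E → ℝ) (hp : ∀ e, 0 < p e ∧ p e < 1)
    (q : ℝ) (hq : 1 ≤ q)
    (σ τ : E → Bool) :
    rcProb ends p q σ * rcProb ends p q τ ≤
      rcProb ends p q (fun e => min (σ e) (τ e)) *
        rcProb ends p q (fun e => max (σ e) (τ e)) := by
  have hw := rcWeight_mul_le_inf_mul_sup ends (fun e => ⟨(hp e).1.le, (hp e).2.le⟩) hq σ τ
  simp only [rcProb, div_mul_div_comm]
  exact div_le_div_of_nonneg_right hw (mul_self_nonneg _)

end RandomCluster
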